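/- arXiv:1107.4699 — 2 statements merged into one kernel-verified Lean document; each statement's English description precedes it below -/
import Mathlib

section
/- The common refinement of finitely many P-primary congruences on a commutative monoid Q is P-primary. -/
/-! In the quotient by the refinement `d`, an element is nil exactly when it is nil modulo every
`cᵢ`, and it is cancellative as soon as it is cancellative modulo every `cᵢ`. Nilpotency of `q`
means that `k • q` is nil for all large `k`, and finitely many such conditions hold at once, so
the nilpotent ideal of `d` is the intersection of those of the `cᵢ`, which is `P`. An element
outside `P` is cancellative modulo each `cᵢ`, hence modulo `d`. -/

variable {Q : Type*} [AddCommMonoid Q]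

/-- An element is nil if it is absorbing. -/
def IsNilElem {M : Type*} [AddCommMonoid M] (x : M) : Prop := ∀ q : M, q + x = x

/-- An element is nilpotent if some positive multiple of it is nil. -/
def IsNilpotentElem {M : Type*} [AddCommMonoid M] (x : M) : Prop :=
  ∃ n : ℕ, 0 < n ∧ IsNilElem (n • x)

/-- An element is cancellative if addition by it is injective. -/
def IsCancellativeElem {M : Type*} [AddCommMonoid M] (x : M) : Prop :=
  ∀ a b : M, x + a = x + b → a = b

/-- An ideal of a monoid: closed under addition of arbitrary elements. -/
def IsMonIdeal (T : Set Q) : Prop := ∀ t ∈ T, ∀ q : Q, t + q ∈ T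

/-- A prime ideal of a monoid. -/
def IsMonPrime (P : Set Q) : Prop :=
  IsMonIdeal P ∧ ∀ t s : Q, t + s ∈ P → t ∈ P ∨ s ∈ P

/-- The nilpotent ideal of a congruence: elements with nilpotent image in the
quotient monoid. -/
def nilpotentIdeal (c : AddCon Q) : Set Q := {q : Q | IsNilpotentElem (c.mk' q)}

/-- A congruence is `P`-primary if it is primary (every element of the
quotient is nilpotent or cancellative) with nilpotent ideal `P`. -/
def IsPPrimary (P : Set Q) (c : AddCon Q) : Prop :=
  (∀ x : c.Quotient, IsNilpotentElem x ∨ IsCancellativeElem x) ∧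
    nilpotentIdeal c = P

section Elements

variable {M : Type*} [AddCommMonoid M] {x : M}

theorem IsNilElem.add_left (hx : IsNilElem x) (y : M) : IsNilElem (y + x) := fun q => by
  rw [hx y, hx q]

theorem IsNilElem.nsmul_of_le {m k : ℕ} (hm : IsNilElem (m • x)) (hmk : m ≤ k) :
    IsNilElem (k • x) := by
  obtain ⟨j, rfl⟩ := Nat.exists_eq_add_of_le hmk
  rw [add_comm, add_nsmul]
  exact hm.add_left _

theorem isNilpotentElem_iff_eventually_isNilElem :
    IsNilpotentElem x ↔ ∀ᶠ k : ℕ in Filter.atTop, IsNilElem (k • x) := by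
  rw [Filter.eventually_atTop]
  constructor
  · rintro ⟨m, -, hm⟩
    exact ⟨m, fun k hk => hm.nsmul_of_le hk⟩
  · rintro ⟨m, hm⟩
    exact ⟨m + 1, m.succ_pos, hm _ m.le_succ⟩

end Elements

namespace AddCon

theorem isNilElem_mk'_iff (c : AddCon Q) (y : Q) :
    IsNilElem (c.mk' y) ↔ ∀ a, c (a + y) y := by
  simp only [IsNilElem, mk'_surjective.forall, coe_mk', ← coe_add, AddCon.eq]

section Refinement

variable {ι : Type*} (c : ι → AddCon Q) (d : AddCon Q) (hd : ∀ x y, d x y ↔ ∀ i, c i x y)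
include hd

theorem isNilElem_mk'_iff_of_forall (y : Q) :
    IsNilElem (d.mk' y) ↔ ∀ i, IsNilElem ((c i).mk' y) := by
  simp only [isNilElem_mk'_iff, hd]
  exact forall_comm

theorem nilpotentIdeal_eq_iInter [Finite ι] : nilpotentIdeal d = ⋂ i, nilpotentIdeal (c i) := by
  ext q
  simp only [nilpotentIdeal, Set.mem_ofPred_eq, Set.mem_iInter,
    isNilpotentElem_iff_eventually_isNilElem, ← map_nsmul, isNilElem_mk'_iff_of_forall c d hd]
  exact Filter.eventually_all

theorem isCancellativeElem_mk'_of_forall {y : Q} (hy : ∀ i, IsCancellativeElem ((c i).mk' y)) :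
    IsCancellativeElem (d.mk' y) := by
  simp only [IsCancellativeElem, mk'_surjective.forall, coe_mk', ← coe_add, AddCon.eq, hd]
    at hy ⊢
  exact fun a b hab i => hy i a b (hab i)

end Refinement

end AddCon

theorem IsPPrimary.isCancellativeElem_mk' {P : Set Q} {c : AddCon Q} (hc : IsPPrimary P c)
    {q : Q} (hq : q ∉ P) : IsCancellativeElem (c.mk' q) :=
  (hc.1 (c.mk' q)).resolve_left fun hnil => hq (hc.2 ▸ hnil)

theorem common_refinement_PPrimary_general (P : Set Q)
    (n : ℕ) (hn : 0 < n) (c : Fin n → AddCon Q)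
    (hc : ∀ i, IsPPrimary P (c i))
    (d : AddCon Q) (hd : ∀ x y : Q, d x y ↔ ∀ i, c i x y) :
    IsPPrimary P d := by
  have : Nonempty (Fin n) := ⟨⟨0, hn⟩⟩
  have hnil : nilpotentIdeal d = P := by
    simp only [AddCon.nilpotentIdeal_eq_iInter c d hd, fun i => (hc i).2, Set.iInter_const]
  refine ⟨AddCon.mk'_surjective.forall.2 fun q => ?_, hnil⟩
  by_cases hq : q ∈ P
  · exact .inl (show q ∈ nilpotentIdeal d by rwa [hnil])
  · exact .inr <| AddCon.isCancellativeElem_mk'_of_forall c d hd fun i =>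
      (hc i).isCancellativeElem_mk' hq

/-- The common refinement of finitely many `P`-primary congruences is
`P`-primary. -/
theorem common_refinement_PPrimary (P : Set Q) (hP : IsMonPrime P)
    (n : ℕ) (hn : 0 < n) (c : Fin n → AddCon Q)
    (hc : ∀ i, IsPPrimary P (c i))
    (d : AddCon Q) (hd : ∀ x y : Q, d x y ↔ ∀ i, c i x y) :
    IsPPrimary P d :=
  common_refinement_PPrimary_general P n hn c hc d hd
end

section
/- For a binomial ideal I in the group algebra k[Φ] of a finitely generated abelian group Φ over a field k: if I is proper, then there exist a subgroup L ⊆ Φ and a group homomorphism (character) ρ: L → k* such that I is generated by the elements 1 − ρ(u)⁻¹ t^u for u ∈ L; equivalently I = ⟨t^u − ρ(u − v) t^v : u − v ∈ L⟩. -/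
/-! Modulo a proper ideal `I`, every monomial `t^u` becomes a unit of `k[Φ]/I`, and `k` embeds
into `k[Φ]/I`. The exponents whose monomial becomes a scalar form a subgroup `L` (the preimage of
`kˣ` under `u ↦ t^u`), and reading off that scalar is a character `ρ` of `L`. A binomial
`t^u - λ t^v` lies in `I` exactly when `t^(u-v) ≡ λ` modulo `I`, i.e. when `u - v ∈ L` and
`λ = ρ(u - v)`. Hence the binomials generating `I` are among the generators of `I_ρ`, and all
generators of `I_ρ` lie in `I`. -/

variable {k : Type*} [Field k] {Φ : Type*} [AddCommGroup Φ]

/-- The monomial `t^u` in the group algebra `k[Φ]`. -/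
noncomputable def mono (k : Type*) [Field k] {Φ : Type*} [AddCommMonoid Φ] (u : Φ) :
    AddMonoidAlgebra k Φ := AddMonoidAlgebra.single u 1

/-- A binomial ideal is one generated by binomials `t^u − λ t^v`, `λ ∈ k`
possibly `0`. -/
def IsBinomialIdeal (I : Ideal (AddMonoidAlgebra k Φ)) : Prop :=
  ∃ S : Set (AddMonoidAlgebra k Φ), I = Ideal.span S ∧
    ∀ f ∈ S, ∃ (u v : Φ) (lam : k), f = mono k u - lam • mono k v

namespace AddMonoidAlgebra

section

variable {R : Type*} [Ring R] [Algebra k R] (φ : AddMonoidAlgebra k Φ →ₐ[k] R)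

noncomputable def monomialUnits : Multiplicative Φ →* Rˣ :=
  ((φ : AddMonoidAlgebra k Φ →* R).comp (of k Φ)).toHomUnits

lemma coe_monomialUnits (u : Φ) : (monomialUnits φ (.ofAdd u) : R) = φ (mono k u) := rfl

lemma map_binomial_eq_zero_iff {u v : Φ} {c : k} :
    φ (mono k u - c • mono k v) = 0 ↔ φ (mono k (u - v)) = algebraMap k R c := by
  have hsplit : mono k u = mono k (u - v) * mono k v := by
    simp [mono, single_mul_single]
  rw [hsplit, map_sub, map_mul, map_smul, Algebra.smul_def, ← sub_mul,
    ← coe_monomialUnits φ v, Units.mul_left_eq_zero, sub_eq_zero]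

noncomputable def scalarExponents : AddSubgroup Φ :=
  Subgroup.toAddSubgroup' ((Units.map (algebraMap k R : k →* R)).range.comap (monomialUnits φ))

variable [Nontrivial R]

-- `Multiplicative (scalarExponents φ)` is definitionally the subgroup
-- `(Units.map (algebraMap k R)).range.comap (monomialUnits φ)` of `Multiplicative Φ`.
noncomputable def scalarCharacter : Multiplicative (scalarExponents φ) →* kˣ :=
  (MonoidHom.ofInjective (Units.map_injective (algebraMap k R).injective)).symm.toMonoidHom.comp
    ((monomialUnits φ).subgroupComap (Units.map (algebraMap k R : k →* R)).range :
      Multiplicative (scalarExponents φ) →* _)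

lemma algebraMap_scalarCharacter (u : scalarExponents φ) :
    algebraMap k R (scalarCharacter φ (.ofAdd u)) = φ (mono k u) :=
  congr_arg Units.val (MonoidHom.apply_ofInjective_symm
    (Units.map_injective (algebraMap k R).injective) ⟨monomialUnits φ (.ofAdd u), u.2⟩)

lemma map_mono_eq_algebraMap_iff {w : Φ} {c : k} :
    φ (mono k w) = algebraMap k R c ↔
      ∃ h : w ∈ scalarExponents φ, c = scalarCharacter φ (.ofAdd ⟨w, h⟩) := by
  constructor
  · intro hw
    have hc : c ≠ 0 := by
      rintro rfl
      exact (monomialUnits φ (.ofAdd w)).ne_zero (by rw [coe_monomialUnits, hw, map_zero])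
    have hmem : w ∈ scalarExponents φ := ⟨Units.mk0 c hc, Units.ext hw.symm⟩
    refine ⟨hmem, (algebraMap k R).injective ?_⟩
    rw [algebraMap_scalarCharacter, hw]
  · rintro ⟨h, rfl⟩
    exact (algebraMap_scalarCharacter φ ⟨w, h⟩).symm

end

lemma binomial_mem_iff (I : Ideal (AddMonoidAlgebra k Φ)) [Nontrivial (AddMonoidAlgebra k Φ ⧸ I)]
    {u v : Φ} {c : k} :
    mono k u - c • mono k v ∈ I ↔ ∃ h : u - v ∈ scalarExponents (Ideal.Quotient.mkₐ k I),
      c = scalarCharacter (Ideal.Quotient.mkₐ k I) (.ofAdd ⟨u - v, h⟩) := by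
  rw [← Ideal.Quotient.eq_zero_iff_mem, ← Ideal.Quotient.mkₐ_eq_mk k, map_binomial_eq_zero_iff,
    map_mono_eq_algebraMap_iff]

end AddMonoidAlgebra

open AddMonoidAlgebra in
theorem binomial_ideal_in_group_algebra_is_Irho_general
    (I : Ideal (AddMonoidAlgebra k Φ))
    (hbin : IsBinomialIdeal I) (hproper : I ≠ ⊤) :
    ∃ (L : AddSubgroup Φ) (ρ : Multiplicative L →* kˣ),
      I = Ideal.span {f : AddMonoidAlgebra k Φ | ∃ (u v : Φ) (h : u - v ∈ L),
        f = mono k u -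
          ((ρ (Multiplicative.ofAdd (⟨u - v, h⟩ : L)) : kˣ) : k) • mono k v} := by
  have := Ideal.Quotient.nontrivial_iff.2 hproper
  obtain ⟨S, hIS, hS⟩ := hbin
  refine ⟨_, scalarCharacter (Ideal.Quotient.mkₐ k I), le_antisymm ?_ (Ideal.span_le.2 ?_)⟩
  · refine hIS.trans_le (Ideal.span_mono fun f hf => ?_)
    obtain ⟨u, v, c, rfl⟩ := hS f hf
    obtain ⟨h, rfl⟩ := (binomial_mem_iff I).1 (hIS ▸ Ideal.subset_span hf)
    exact ⟨u, v, h, rfl⟩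
  · rintro _ ⟨u, v, h, rfl⟩
    exact (binomial_mem_iff I).2 ⟨h, rfl⟩

/-- Every proper binomial ideal `I ⊆ k[Φ]`, `Φ` a finitely generated abelian
group, equals `I_ρ = ⟨t^u − ρ(u − v) t^v : u − v ∈ L⟩` for some subgroup
`L ⊆ Φ` and character `ρ : L → k*`. -/
theorem binomial_ideal_in_group_algebra_is_Irho [AddGroup.FG Φ]
    (I : Ideal (AddMonoidAlgebra k Φ))
    (hbin : IsBinomialIdeal I) (hproper : I ≠ ⊤) :
    ∃ (L : AddSubgroup Φ) (ρ : Multiplicative L →* kˣ),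
      I = Ideal.span {f : AddMonoidAlgebra k Φ | ∃ (u v : Φ) (h : u - v ∈ L),
        f = mono k u -
          ((ρ (Multiplicative.ofAdd (⟨u - v, h⟩ : L)) : kˣ) : k) • mono k v} :=
  binomial_ideal_in_group_algebra_is_Irho_general I hbin hproper
end
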